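/- arXiv:1408.5964 — 5 statements merged into one kernel-verified Lean document; each statement's English description precedes it below -/
import Mathlib

section
/- Let (𝒮, 𝒦) be a C²KA and 𝒞 a system of communicating agents over it, and suppose the deactivation stimulus 𝔡 is not a basic stimulus. If A ∈ 𝒞 is an agent whose behaviour beh(A) is a fixed point behaviour, then there is no agent B ∈ 𝒞 with B ≠ A such that B →→ A. -/
/-- A Communicating Concurrent Kleene Algebra (C²KA): a stimulus structure
(idempotent semiring with absorbing `ds`), a concurrent Kleene algebra
(two Kleene algebras over a common idempotent additive structure linked by the
exchange axiom), and the two semimodule actions `act` and `lam`. -/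
structure C2KA (S K : Type) where
  splus : S → S → S
  sdot : S → S → S
  ds : S
  ns : S
  splus_assoc : ∀ a b c, splus (splus a b) c = splus a (splus b c)
  splus_comm : ∀ a b, splus a b = splus b a
  splus_idem : ∀ a, splus a a = a
  splus_ident : ∀ a, splus ds a = a
  sdot_assoc : ∀ a b c, sdot (sdot a b) c = sdot a (sdot b c)
  sdot_ident_left : ∀ a, sdot ns a = a
  sdot_ident_right : ∀ a, sdot a ns = a
  sdot_distrib_left : ∀ a b c, sdot a (splus b c) = splus (sdot a b) (sdot a c)
  sdot_distrib_right : ∀ a b c, sdot (splus a b) c = splus (sdot a c) (sdot b c)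
  ds_absorb_left : ∀ a, sdot ds a = ds
  ds_absorb_right : ∀ a, sdot a ds = ds
  kplus : K → K → K
  kpar : K → K → K
  kseq : K → K → K
  kiterPar : K → K
  kiterSeq : K → K
  kzero : K
  kone : K
  kplus_assoc : ∀ a b c, kplus (kplus a b) c = kplus a (kplus b c)
  kplus_comm : ∀ a b, kplus a b = kplus b a
  kplus_idem : ∀ a, kplus a a = a
  kplus_ident : ∀ a, kplus kzero a = a
  kpar_assoc : ∀ a b c, kpar (kpar a b) c = kpar a (kpar b c)
  kpar_ident_left : ∀ a, kpar kone a = a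
  kpar_ident_right : ∀ a, kpar a kone = a
  kpar_distrib_left : ∀ a b c, kpar a (kplus b c) = kplus (kpar a b) (kpar a c)
  kpar_distrib_right : ∀ a b c, kpar (kplus a b) c = kplus (kpar a c) (kpar b c)
  kpar_zero_left : ∀ a, kpar kzero a = kzero
  kpar_zero_right : ∀ a, kpar a kzero = kzero
  kseq_assoc : ∀ a b c, kseq (kseq a b) c = kseq a (kseq b c)
  kseq_ident_left : ∀ a, kseq kone a = a
  kseq_ident_right : ∀ a, kseq a kone = a
  kseq_distrib_left : ∀ a b c, kseq a (kplus b c) = kplus (kseq a b) (kseq a c)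
  kseq_distrib_right : ∀ a b c, kseq (kplus a b) c = kplus (kseq a c) (kseq b c)
  kseq_zero_left : ∀ a, kseq kzero a = kzero
  kseq_zero_right : ∀ a, kseq a kzero = kzero
  kiterPar_unfold : ∀ a, kplus (kplus kone (kpar a (kiterPar a))) (kiterPar a) = kiterPar a
  kiterPar_ind_left : ∀ a b x, kplus (kplus b (kpar a x)) x = x → kplus (kpar (kiterPar a) b) x = x
  kiterPar_ind_right : ∀ a b x, kplus (kplus b (kpar x a)) x = x → kplus (kpar b (kiterPar a)) x = x
  kiterSeq_unfold : ∀ a, kplus (kplus kone (kseq a (kiterSeq a))) (kiterSeq a) = kiterSeq a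
  kiterSeq_ind_left : ∀ a b x, kplus (kplus b (kseq a x)) x = x → kplus (kseq (kiterSeq a) b) x = x
  kiterSeq_ind_right : ∀ a b x, kplus (kplus b (kseq x a)) x = x → kplus (kseq b (kiterSeq a)) x = x
  exchange : ∀ a b c d,
    kplus (kseq (kpar a b) (kpar c d)) (kpar (kseq b c) (kseq a d)) = kpar (kseq b c) (kseq a d)
  act : S → K → K
  lam : K → S → S
  act_kplus : ∀ s a b, act s (kplus a b) = kplus (act s a) (act s b)
  act_splus : ∀ s t a, act (splus s t) a = kplus (act s a) (act t a)
  act_sdot : ∀ s t a, act (sdot s t) a = act s (act t a)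
  act_ns : ∀ a, act ns a = a
  act_ds : ∀ a, act ds a = kzero
  lam_splus : ∀ a s t, lam a (splus s t) = splus (lam a s) (lam a t)
  lam_kplus : ∀ a b s, lam (kplus a b) s = splus (lam a s) (lam b s)
  lam_kone : ∀ s, lam kone s = s
  lam_kzero : ∀ s, lam kzero s = ds
  act_kseq : ∀ s a b, act s (kseq a b) = kseq (act s a) (act (lam a s) b)
  cascade : ∀ s a b c, kplus c a = a ∨ kseq (act s a) (act (lam c s) b) = kzero
  lam_sdot : ∀ a s t, lam a (sdot s t) = sdot (lam (act t a) s) (lam a t)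

namespace C2KA

variable {S K A : Type}

/-- The natural order on stimuli: `s ≤_S t` iff `s ⊕ t = t`. -/
def sle (C : C2KA S K) (s t : S) : Prop := C.splus s t = t

/-- The natural order on behaviours: `a ≤_K b` iff `a + b = b`. -/
def kle (C : C2KA S K) (a b : K) : Prop := C.kplus a b = b

/-- Division of stimuli: `x ∣ y` iff `∃ z, y = x ⊙ z`. -/
def sdiv (C : C2KA S K) (x y : S) : Prop := ∃ z, y = C.sdot x z

/-- Basic stimuli: indivisible with respect to `⊙`. -/
def basic (C : C2KA S K) (s : S) : Prop :=
  (∀ t, C.sdiv t s → t = C.ns ∨ t = s) ∧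
  (∀ t r, C.sdiv s (C.sdot t r) → C.sdiv s t ∨ C.sdiv s r)

/-- A fixed point behaviour: fixed by every stimulus other than `𝔡`. -/
def fixedPoint (C : C2KA S K) (a : K) : Prop := ∀ s, s ≠ C.ds → C.act s a = a

/-- A C²KA is without reactivation iff `s ∘ 1 = 1` for every `s ≠ 𝔡`. -/
def withoutReactivation (C : C2KA S K) : Prop := ∀ s, s ≠ C.ds → C.act s C.kone = C.kone

/-- The orbit of a behaviour `a`: all behavioural responses of `a` to stimuli. -/
def orb (C : C2KA S K) (a : K) : Set K := {b | ∃ s, C.act s a = b}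

/-- A dependence relation on `K`: bilinear, with `0` and `1` depending on
nothing and nothing depending on them. -/
def IsDependence (C : C2KA S K) (R : K → K → Prop) : Prop :=
  (∀ a b c, R c (C.kplus a b) ↔ (R c a ∨ R c b)) ∧
  (∀ a b c, R (C.kplus b c) a ↔ (R b a ∨ R c a)) ∧
  (∀ a, ¬ R C.kzero a) ∧ (∀ a, ¬ R a C.kzero) ∧
  (∀ a, ¬ R C.kone a) ∧ (∀ a, ¬ R a C.kone)

/-- Potential for direct communication via external stimuli: `P →_S Q` iff
`P ≠ Q` and there are basic stimuli `s, t` with `t ≤_S λ(beh P, s)` and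
`t ∘ beh Q ≠ beh Q`. -/
def commD (C : C2KA S K) (beh : A → K) (P Q : A) : Prop :=
  P ≠ Q ∧ ∃ s t, C.basic s ∧ C.basic t ∧ C.sle t (C.lam (beh P) s) ∧
    C.act t (beh Q) ≠ beh Q

/-- Potential for communication via external stimuli using at most `n` basic
stimuli (`n ≥ 1`). -/
def commN (C : C2KA S K) (beh : A → K) : ℕ → A → A → Prop
  | 0, _, _ => False
  | 1, P, Q => commD C beh P Q
  | n + 2, P, Q => ∃ W, W ≠ P ∧ W ≠ Q ∧ commN C beh (n + 1) P W ∧ commD C beh W Q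

/-- Potential for communication via external stimuli: `P →→ Q`. -/
def comm (C : C2KA S K) (beh : A → K) (P Q : A) : Prop :=
  ∃ n, 1 ≤ n ∧ commN C beh n P Q

/-- A system is stimuli-connected iff every partition of it into two nonempty
parts admits a potential communication via external stimuli across the parts. -/
def stimuliConnected (C : C2KA S K) (beh : A → K) : Prop :=
  ∀ X₁ X₂ : Set A, X₁.Nonempty → X₂.Nonempty → X₁ ∩ X₂ = ∅ → X₁ ∪ X₂ = Set.univ →
    ∃ P ∈ X₁, ∃ Q ∈ X₂, comm C beh P Q ∨ comm C beh Q P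

/-- A universally influential agent: `A →→ B` for every other agent `B`. -/
def universallyInfluential (C : C2KA S K) (beh : A → K) (P : A) : Prop :=
  ∀ Q, Q ≠ P → comm C beh P Q

/-- A communication fixed point: `¬ (A →→ B)` for every other agent `B`. -/
def commFixedPoint (C : C2KA S K) (beh : A → K) (P : A) : Prop :=
  ∀ Q, Q ≠ P → ¬ comm C beh P Q

/-- Potential for direct communication via shared environments:
`P →_E Q` iff `P ≠ Q` and `beh Q R beh P`. -/
def envCommD (C : C2KA S K) (beh : A → K) (R : K → K → Prop) (P Q : A) : Prop :=
  P ≠ Q ∧ R (beh Q) (beh P)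

/-- Potential for direct communication: via external stimuli or via shared
environments. -/
def pfcD (C : C2KA S K) (beh : A → K) (R : K → K → Prop) (P Q : A) : Prop :=
  commD C beh P Q ∨ envCommD C beh R P Q

/-- Potential for communication: the inductive closure of `pfcD` through
intermediate agents. -/
inductive pfc (C : C2KA S K) (beh : A → K) (R : K → K → Prop) : A → A → Prop
  | direct : ∀ {P Q : A}, pfcD C beh R P Q → pfc C beh R P Q
  | step : ∀ {P W Q : A}, pfcD C beh R P W → pfc C beh R W Q → pfc C beh R P Q

end C2KA

/-- If `𝔡` is not a basic stimulus and the behaviour of agent `A`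
is a fixed point behaviour, then no other agent has the potential for
communication via external stimuli with `A`. -/
theorem stmt_1 {S K A : Type} (C : C2KA S K) (beh : A → K)
    (hd : ¬ C2KA.basic C C.ds) (Ag : A)
    (hfix : C2KA.fixedPoint C (beh Ag)) :
    ¬ ∃ B : A, B ≠ Ag ∧ C2KA.comm C beh B Ag := by
  have hnoD : ∀ W, ¬ C2KA.commD C beh W Ag := by
    rintro W ⟨hne, s, t, hbs, hbt, hle, hact⟩
    have htd : t ≠ C.ds := fun h => hd (h ▸ hbt)
    exact hact (hfix t htd)
  rintro ⟨B, hBA, n, hn, hcomm⟩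
  match n, hn, hcomm with
  | 1, _, h => exact hnoD B h
  | (k+2), _, ⟨W, _, _, _, hW⟩ => exact hnoD W hW
end

section
/- Let (𝒮, 𝒦) be a C²KA, 𝒞 a system of communicating agents over it, and R a dependence relation on K. Let A, B, C ∈ 𝒞 be pairwise distinct with behaviours a = beh(A), b = beh(B), c = beh(C), let d ∈ K, and let C' ∈ 𝒞 be an agent with behaviour c + d distinct from A and from B. If pfcD(A, C), pfcD(C, B), and for every basic stimulus t one has ¬(t∘d ≤_K c + d), then pfcD(A, C') and pfcD(C', B); consequently pfc(A, B) holds. -/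
/-- Replacing the intermediate agent `C` (with behaviour `c`) of a
potential communication path by an agent `C'` with behaviour `c + d` preserves
the potential for communication, provided no basic stimulus `t` satisfies
`t ∘ d ≤_K c + d`. -/
theorem stmt_6 {S K A : Type} (C : C2KA S K) (beh : A → K)
    (R : K → K → Prop) (hR : C2KA.IsDependence C R)
    (Ag Bg Cg C' : A)
    (hAB : Ag ≠ Bg) (hAC : Ag ≠ Cg) (hBC : Bg ≠ Cg)
    (hC'A : C' ≠ Ag) (hC'B : C' ≠ Bg)
    (d : K) (hbeh : beh C' = C.kplus (beh Cg) d)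
    (h1 : C2KA.pfcD C beh R Ag Cg) (h2 : C2KA.pfcD C beh R Cg Bg)
    (h3 : ∀ t, C2KA.basic C t → ¬ C2KA.kle C (C.act t d) (C.kplus (beh Cg) d)) :
    C2KA.pfcD C beh R Ag C' ∧ C2KA.pfcD C beh R C' Bg ∧ C2KA.pfc C beh R Ag Bg := by
  have hAC' : C2KA.pfcD C beh R Ag C' := by
    rcases h1 with ⟨_, s, t, hs, ht, hle, hne⟩ | ⟨_, hRel⟩
    · left
      refine ⟨hC'A.symm, s, t, hs, ht, hle, ?_⟩
      rw [hbeh, C.act_kplus]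
      intro heq
      exact h3 t ht (by
        show C.kplus (C.act t d) (C.kplus (beh Cg) d) = C.kplus (beh Cg) d
        conv_lhs => rw [← heq]
        rw [C.kplus_comm (C.act t (beh Cg)) (C.act t d), ← C.kplus_assoc,
          C.kplus_idem, C.kplus_comm, heq])
    · right
      refine ⟨hC'A.symm, ?_⟩
      rw [hbeh]
      exact (hR.2.1 (beh Ag) (beh Cg) d).mpr (Or.inl hRel)
  have hC'B : C2KA.pfcD C beh R C' Bg := by
    rcases h2 with ⟨_, s, t, hs, ht, hle, hne⟩ | ⟨_, hRel⟩
    · left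
      refine ⟨hC'B, s, t, hs, ht, ?_, hne⟩
      rw [hbeh, C.lam_kplus]
      show C.splus t (C.splus (C.lam (beh Cg) s) (C.lam d s)) = _
      rw [← C.splus_assoc, hle]
    · right
      refine ⟨hC'B, ?_⟩
      rw [hbeh]
      exact (hR.1 (beh Cg) d (beh Bg)).mpr (Or.inl hRel)
  exact ⟨hAC', hC'B, C2KA.pfc.step hAC' (C2KA.pfc.direct hC'B)⟩
end

section
/- Let (𝒮, 𝒦) be a C²KA in which the deactivation stimulus 𝔡 is not a basic stimulus, 𝒞 a system of communicating agents over it, and R a dependence relation on K. Let A, C' ∈ 𝒞 with A ≠ C' and suppose c' = beh(C') is a fixed point behaviour. Then pfcD(A, C') holds if and only if c' R beh(A); in other words, an agent with a fixed point behaviour can only be directly communicated with via shared environments. -/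
/-- If `𝔡` is not basic and `c' = beh C'` is a fixed point
behaviour, then `pfcD(A, C')` holds iff `c' R beh A`. -/
theorem stmt_8 {S K A : Type} (C : C2KA S K) (beh : A → K)
    (R : K → K → Prop) (hR : C2KA.IsDependence C R)
    (hd : ¬ C2KA.basic C C.ds)
    (Ag C' : A) (hne : Ag ≠ C')
    (hfix : C2KA.fixedPoint C (beh C')) :
    C2KA.pfcD C beh R Ag C' ↔ R (beh C') (beh Ag) := by
  constructor
  · rintro (⟨_, s, t, _, ht, _, hact⟩ | ⟨_, h⟩)
    · exact absurd (hfix t (fun h => hd (h ▸ ht))) hact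
    · exact h
  · intro h
    exact Or.inr ⟨hne, h⟩
end

section
/- Let (𝒮, 𝒦) be a C²KA without reactivation in which the deactivation stimulus 𝔡 is not a basic stimulus, 𝒞 a system of communicating agents over it, and R a dependence relation on K. Let I ∈ 𝒞 be the idle agent, beh(I) = 1. Then for every agent A ∈ 𝒞 with A ≠ I, pfcD(A, I) does not hold. -/
namespace C2KA

variable {S K A : Type} {C : C2KA S K}

theorem act_kone_of_basic (hwr : C.withoutReactivation) (hd : ¬ C.basic C.ds) {t : S}
    (ht : C.basic t) : C.act t C.kone = C.kone :=
  hwr t fun htd => hd (htd ▸ ht)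

theorem not_commD_of_beh_eq_kone (hwr : C.withoutReactivation) (hd : ¬ C.basic C.ds)
    {beh : A → K} {P Q : A} (hQ : beh Q = C.kone) : ¬ C.commD beh P Q := by
  rintro ⟨-, -, t, -, ht, -, hmoved⟩
  rw [hQ] at hmoved
  exact hmoved (act_kone_of_basic hwr hd ht)

theorem IsDependence.not_kone_rel {R : K → K → Prop} (hR : C.IsDependence R) (a : K) :
    ¬ R C.kone a :=
  hR.2.2.2.2.1 a

theorem not_envCommD_of_beh_eq_kone {R : K → K → Prop} (hR : C.IsDependence R)
    {beh : A → K} {P Q : A} (hQ : beh Q = C.kone) : ¬ C.envCommD beh R P Q := by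
  rintro ⟨-, hdep⟩
  rw [hQ] at hdep
  exact hR.not_kone_rel _ hdep

end C2KA

/-- In a C²KA without reactivation in which `𝔡` is not basic, no
agent has the potential for direct communication with the idle agent. -/
theorem stmt_9 {S K A : Type} (C : C2KA S K) (beh : A → K)
    (R : K → K → Prop) (hR : C2KA.IsDependence C R)
    (hwr : C2KA.withoutReactivation C) (hd : ¬ C2KA.basic C C.ds)
    (I : A) (hI : beh I = C.kone) :
    ∀ Ag : A, Ag ≠ I → ¬ C2KA.pfcD C beh R Ag I :=
  fun _ _ => not_or_intro (C2KA.not_commD_of_beh_eq_kone hwr hd hI)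
    (C2KA.not_envCommD_of_beh_eq_kone hR hI)
end

section
/- Let (𝒮, 𝒦) be a C²KA in which the deactivation stimulus 𝔡 is not a basic stimulus, 𝒞 a system of communicating agents over it, and R a dependence relation on K. Let O ∈ 𝒞 be the inactive agent, beh(O) = 0. Then O is a communication fixed point, i.e. ¬(O →→ B) for every B ∈ 𝒞 with B ≠ O; moreover pfcD(O, B) fails for every B ∈ 𝒞 with B ≠ O. -/
/-- If `𝔡` is not basic, the inactive agent (behaviour `0`) is a
communication fixed point, and moreover has no potential for direct
communication with any other agent. -/
theorem stmt_10 {S K A : Type} (C : C2KA S K) (beh : A → K)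
    (R : K → K → Prop) (hR : C2KA.IsDependence C R)
    (hd : ¬ C2KA.basic C C.ds)
    (O : A) (hO : beh O = C.kzero) :
    (∀ B : A, B ≠ O → ¬ C2KA.comm C beh O B) ∧
    (∀ B : A, B ≠ O → ¬ C2KA.pfcD C beh R O B) := by

  have hcommD : ∀ Q : A, ¬ C2KA.commD C beh O Q := by
    rintro Q ⟨hne, s, t, hs, ht, hle, hact⟩
    have hlam : C.lam (beh O) s = C.ds := by rw [hO, C.lam_kzero]
    rw [hlam] at hle
    have : t = C.ds := by
      have := hle
      unfold C2KA.sle at this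
      rw [C.splus_comm, C.splus_ident] at this
      exact this
    exact hd (this ▸ ht)
  constructor
  · rintro B hB ⟨n, hn, hcn⟩
    clear hB hn
    induction n generalizing B with
    | zero => exact hcn
    | succ m ih =>
      cases m with
      | zero => exact hcommD B hcn
      | succ k =>
        obtain ⟨W, _, _, h1, _⟩ := hcn
        exact ih W h1
  · rintro B hB (h | ⟨_, hRB⟩)
    · exact hcommD B h
    · rw [hO] at hRB
      exact hR.2.2.2.1 _ hRB
end
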